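/- Let f(x) = Σ_{j=0}^∞ a_j x^j be an entire function with a_j > 0 for all j, and let S_n(x) = Σ_{j=0}^n a_j x^j be its sections. Suppose there exists an infinite increasing sequence of indices n_1 < n_2 < ... such that each S_{n_j} has all of its complex roots real, and suppose the limit δ_∞ = lim_{n→∞} a_n^2/(a_{n−1} a_{n+1}) exists. Then for every positive integer m the polynomial Σ_{j=0}^m x^j/(j!·(√δ_∞)^{j^2}) has all of its complex roots real. -/

import Mathlib

open Polynomial Filter

/-- A real polynomial is hyperbolic if all of its complex roots are real. -/
def Hyperbolic (P : Polynomial ℝ) : Prop :=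
  ∀ z : ℂ, Polynomial.aeval z P = 0 → z.im = 0

/-- The `i`-th section `a_0 + a_1 x + ... + a_i x^i` of the coefficient sequence `a`. -/
noncomputable def sect (a : ℕ → ℝ) (i : ℕ) : Polynomial ℝ :=
  ∑ j ∈ Finset.range (i + 1), Polynomial.C (a j) * Polynomial.X ^ j

/-!
Fix `m`. If the section `S_{d+m}` is hyperbolic, so is its `d`-th derivative (Rolle), a polynomial
of degree `m` whose `k`-th coefficient is `C(d+k, k) a_{d+k} d!`. Substituting `x ↦ λ_d x` with
`λ_d = a_d / (a_{d+1} √δ d)` and dividing by `a_d d!` gives hyperbolic polynomials whose `k`-th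
coefficient tends to `1 / (k! √δ^{k²})` as `d → ∞`, because the ratio `a_n / a_{n+1}` is multiplied
asymptotically by `δ` when `n` increases by one. A limit of hyperbolic polynomials of degree `≤ m`
whose `m`-th coefficient does not vanish is hyperbolic, by the uniform bound
`|P(z)| ≥ |lead P| |Im z|^m`.
-/

open scoped Nat Topology

theorem hyperbolic_iff_ne_zero_and_splits {P : ℝ[X]} : Hyperbolic P ↔ P ≠ 0 ∧ P.Splits := by
  constructor
  · intro h
    refine ⟨fun h0 => by simpa [h0] using h Complex.I, ?_⟩
    refine Splits.of_splits_map (algebraMap ℝ ℂ) (IsAlgClosed.splits _) fun z hz => ⟨z.re, ?_⟩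
    have him : z.im = 0 := h z (by simpa [aeval_def, eval_map] using (mem_roots'.1 hz).2)
    exact Complex.ext (by simp) (by simp [him])
  · rintro ⟨h0, hs⟩ z hz
    obtain ⟨r, rfl⟩ := hs.mem_range_of_isRoot h0 (i := algebraMap ℝ ℂ)
      (by simpa [IsRoot, eval_map, aeval_def] using hz)
    simp

theorem Polynomial.Splits.derivative {P : ℝ[X]} (h : P.Splits) : P.derivative.Splits := by
  rw [splits_iff_card_roots] at h ⊢
  have := card_roots_le_derivative P
  have := card_roots' P.derivative
  rw [natDegree_derivative] at *
  omega

theorem Hyperbolic.iterate_derivative {P : ℝ[X]} (h : Hyperbolic P) {k : ℕ} (hk : k ≤ P.natDegree) :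
    Hyperbolic (derivative^[k] P) := by
  rw [hyperbolic_iff_ne_zero_and_splits] at h ⊢
  obtain ⟨hP, hs⟩ := h
  constructor
  · intro h0
    have hcoeff := congrArg (coeff · (P.natDegree - k)) h0
    simp only [coeff_iterate_derivative, Nat.sub_add_cancel hk, coeff_zero, nsmul_eq_mul] at hcoeff
    exact mul_ne_zero (by exact_mod_cast (Nat.descFactorial_pos.2 hk).ne')
      (leadingCoeff_ne_zero.2 hP) hcoeff
  · clear hk
    induction k with
    | zero => exact hs
    | succ k ih => rw [Function.iterate_succ_apply']; exact ih.derivative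

theorem Hyperbolic.C_mul_comp_C_mul_X {P : ℝ[X]} (h : Hyperbolic P) {c r : ℝ} (hc : c ≠ 0)
    (hr : r ≠ 0) : Hyperbolic (C c * P.comp (C r * X)) := by
  intro z hz
  have : aeval ((r : ℂ) * z) P = 0 := by simpa [aeval_comp, hc] using hz
  simpa [hr] using h _ this

theorem Hyperbolic.abs_coeff_mul_abs_im_pow_le_norm_aeval {P : ℝ[X]} (h : Hyperbolic P) {m : ℕ}
    (hm : P.natDegree ≤ m) (z : ℂ) : |P.coeff m| * |z.im| ^ m ≤ ‖aeval z P‖ := by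
  obtain hlt | rfl := hm.lt_or_eq
  · simp [coeff_eq_zero_of_natDegree_lt hlt]
  have hs := (hyperbolic_iff_ne_zero_and_splits.1 h).2
  conv_rhs => rw [hs.eq_prod_roots]
  rw [aeval_mul, aeval_C, norm_mul, map_multiset_prod, Multiset.map_map, coeff_natDegree]
  refine mul_le_mul (by simp) ?_ (by positivity) (norm_nonneg _)
  calc |z.im| ^ P.natDegree = (P.roots.map fun _ => |z.im|).prod := by
        simp [hs.natDegree_eq_card_roots]
    _ ≤ (P.roots.map fun r : ℝ => ‖z - (r : ℂ)‖).prod :=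
        Multiset.prod_map_le_prod_map₀ _ _ (fun _ _ => abs_nonneg _)
          fun r _ => by simpa using Complex.abs_im_le_norm (z - (r : ℂ))
    _ = _ := by
        rw [show ∀ s : Multiset ℂ, ‖s.prod‖ = (s.map (‖·‖)).prod from
          map_multiset_prod (normHom : ℂ →*₀ ℝ), Multiset.map_map]
        simp [Function.comp_def]

theorem Hyperbolic.of_frequently_tendsto_coeff {ι : Type*} {l : Filter ι} {Q : ι → ℝ[X]}
    {P : ℝ[X]} {m : ℕ} (hQ : ∃ᶠ i in l, Hyperbolic (Q i) ∧ (Q i).natDegree ≤ m)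
    (hP : P.natDegree ≤ m) (hPm : P.coeff m ≠ 0)
    (hlim : ∀ k ≤ m, Tendsto (fun i => (Q i).coeff k) l (𝓝 (P.coeff k))) : Hyperbolic P := by
  intro z hz
  by_contra him
  have hsum : Tendsto (fun i => ∑ k ∈ Finset.range (m + 1), (Q i).coeff k • z ^ k) l (𝓝 0) := by
    rw [← hz, aeval_eq_sum_range' (Nat.lt_succ_of_le hP)]
    exact tendsto_finsetSum _ fun k hk =>
      (hlim k (Nat.lt_succ_iff.1 (Finset.mem_range.1 hk))).smul_const _
  have hle : |P.coeff m| * |z.im| ^ m ≤ 0 := by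
    refine le_of_tendsto_of_tendsto_of_frequently ((hlim m le_rfl).abs.mul_const _)
      (tendsto_zero_iff_norm_tendsto_zero.1 hsum) (hQ.mono fun i ⟨hyp, hdeg⟩ => ?_)
    rw [← aeval_eq_sum_range' (Nat.lt_succ_of_le hdeg)]
    exact hyp.abs_coeff_mul_abs_im_pow_le_norm_aeval hdeg z
  have : 0 < |P.coeff m| * |z.im| ^ m := by positivity
  linarith

theorem coeff_sect (a : ℕ → ℝ) (n k : ℕ) : (sect a n).coeff k = if k ≤ n then a k else 0 := by
  simp [sect, coeff_C_mul, coeff_X_pow]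

theorem natDegree_sect_le (a : ℕ → ℝ) (n : ℕ) : (sect a n).natDegree ≤ n :=
  natDegree_le_iff_coeff_eq_zero.2 fun k hk => by rw [coeff_sect, if_neg (by omega)]

theorem natDegree_sect {a : ℕ → ℝ} {n : ℕ} (ha : a n ≠ 0) : (sect a n).natDegree = n :=
  (natDegree_sect_le a n).antisymm (le_natDegree_of_ne_zero (by rwa [coeff_sect, if_pos le_rfl]))

noncomputable def normalizedCoeff (a : ℕ → ℝ) (s : ℝ) (d k : ℕ) : ℝ :=
  (d + k).choose k * (a (d + k) / a d) * (a d / (a (d + 1) * (s * d))) ^ k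

/-- The scaling makes the constant coefficient `1` and the linear one `(d + 1) / (s d) → 1 / s`. -/
noncomputable def normalizedDerivative (a : ℕ → ℝ) (s : ℝ) (m d : ℕ) : ℝ[X] :=
  C (a d * d !)⁻¹ * (derivative^[d] (sect a (d + m))).comp (C (a d / (a (d + 1) * (s * d))) * X)

theorem coeff_normalizedDerivative (a : ℕ → ℝ) (s : ℝ) (m d k : ℕ) :
    (normalizedDerivative a s m d).coeff k = if k ≤ m then normalizedCoeff a s d k else 0 := by
  simp only [normalizedDerivative, normalizedCoeff, coeff_C_mul, comp_C_mul_X_coeff,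
    coeff_iterate_derivative, coeff_sect, Nat.add_comm k d, Nat.add_le_add_iff_left]
  split_ifs
  · rw [Nat.descFactorial_eq_factorial_mul_choose, ← Nat.choose_symm_add, nsmul_eq_mul]
    push_cast
    field_simp
  · simp

theorem natDegree_normalizedDerivative_le (a : ℕ → ℝ) (s : ℝ) (m d : ℕ) :
    (normalizedDerivative a s m d).natDegree ≤ m :=
  natDegree_le_iff_coeff_eq_zero.2 fun k hk => by
    rw [coeff_normalizedDerivative, if_neg (by omega)]

theorem hyperbolic_normalizedDerivative {a : ℕ → ℝ} (hpos : ∀ j, 0 < a j) {s : ℝ} (hs : s ≠ 0)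
    {m d : ℕ} (hd : d ≠ 0) (h : Hyperbolic (sect a (d + m))) :
    Hyperbolic (normalizedDerivative a s m d) := by
  have := hpos d; have := hpos (d + 1)
  refine (h.iterate_derivative ?_).C_mul_comp_C_mul_X (by positivity) (by positivity)
  rw [natDegree_sect (hpos _).ne']
  omega

/-- `(a_n / a_{n+1}) / (a_{n+1} / a_{n+2})` is the reciprocal of the Newton quotient at `n + 1`. -/
theorem tendsto_ratio_div_ratio {a : ℕ → ℝ} (hpos : ∀ j, 0 < a j) {δ : ℝ}
    (hδ : Tendsto (fun n : ℕ => a n ^ 2 / (a (n - 1) * a (n + 1))) atTop (𝓝 δ)) (hδ0 : δ ≠ 0)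
    (k : ℕ) : Tendsto (fun n => a n / a (n + 1) / (a (n + k) / a (n + k + 1))) atTop
      (𝓝 (δ⁻¹ ^ k)) := by
  induction k with
  | zero =>
    refine tendsto_const_nhds.congr fun n => ?_
    have := hpos n; have := hpos (n + 1)
    simp [div_self (by positivity : a n / a (n + 1) ≠ 0)]
  | succ k ih =>
    have hq := (hδ.comp (tendsto_add_atTop_nat (k + 1))).inv₀ hδ0
    refine (ih.mul hq).congr fun n => ?_
    have := hpos n; have := hpos (n + 1); have := hpos (n + k); have := hpos (n + k + 1)
    have := hpos (n + k + 2)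
    simp only [Function.comp_apply, Nat.add_sub_cancel, ← add_assoc]
    field_simp

theorem normalizedCoeff_succ {a : ℕ → ℝ} (hpos : ∀ j, 0 < a j) (s : ℝ) {d : ℕ} (hd : d ≠ 0)
    (k : ℕ) : normalizedCoeff a s d (k + 1) = normalizedCoeff a s d k *
      (a d / a (d + 1) / (a (d + k) / a (d + k + 1)) * ((d + k + 1 : ℝ) / d) / (s * (k + 1))) := by
  have hchoose : ((d + k + 1).choose (k + 1) : ℝ) = (d + k + 1) * (d + k).choose k / (k + 1) := by
    rw [eq_div_iff (by positivity)]
    exact_mod_cast (Nat.add_one_mul_choose_eq (d + k) k).symm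
  have := hpos d; have := hpos (d + 1); have := hpos (d + k); have := hpos (d + k + 1)
  simp only [normalizedCoeff, ← add_assoc, hchoose, pow_succ]
  field_simp

theorem tendsto_normalizedCoeff {a : ℕ → ℝ} (hpos : ∀ j, 0 < a j) {s : ℝ} (hs : 0 < s)
    (hδ : Tendsto (fun n : ℕ => a n ^ 2 / (a (n - 1) * a (n + 1))) atTop (𝓝 (s ^ 2))) (k : ℕ) :
    Tendsto (fun d => normalizedCoeff a s d k) atTop (𝓝 (1 / (k ! * s ^ (k ^ 2)))) := by
  induction k with
  | zero =>
    refine tendsto_const_nhds.congr fun d => ?_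
    simp [normalizedCoeff, (hpos d).ne']
  | succ k ih =>
    have hfrac : Tendsto (fun d : ℕ => ((d + k + 1 : ℝ) / d)) atTop (𝓝 1) := by
      simpa [add_assoc] using (tendsto_natCast_div_add_atTop ((k : ℝ) + 1)).inv₀ one_ne_zero
    have hstep := ih.mul (((tendsto_ratio_div_ratio hpos hδ (by positivity) k).mul hfrac).div_const
      (s * (k + 1)))
    convert hstep.congr' ((eventually_ne_atTop 0).mono fun d hd =>
      (normalizedCoeff_succ hpos s hd k).symm) using 2
    rw [Nat.factorial_succ, show (k + 1) ^ 2 = k ^ 2 + 2 * k + 1 by ring, pow_add, pow_add, pow_mul]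
    push_cast
    field_simp
    rw [← mul_pow, mul_one_div_cancel (by positivity), one_pow]

theorem hyperbolic_sect_one_div_factorial_mul_pow_sq {a : ℕ → ℝ} (hpos : ∀ j, 0 < a j)
    {s : ℝ} (hs : 0 < s)
    (hδ : Tendsto (fun n : ℕ => a n ^ 2 / (a (n - 1) * a (n + 1))) atTop (𝓝 (s ^ 2)))
    (hhyp : ∃ᶠ n in atTop, Hyperbolic (sect a n)) (m : ℕ) :
    Hyperbolic (sect (fun j => 1 / (j ! * s ^ (j ^ 2))) m) := by
  have hshift : ∃ᶠ d in atTop, d ≠ 0 ∧ Hyperbolic (sect a (d + m)) := by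
    rw [frequently_atTop] at hhyp ⊢
    intro d₀
    obtain ⟨n, hn, h⟩ := hhyp (d₀ + m + 1)
    exact ⟨n - m, by omega, by omega, by rwa [Nat.sub_add_cancel (by omega)]⟩
  refine Hyperbolic.of_frequently_tendsto_coeff (Q := normalizedDerivative a s m)
    (hshift.mono fun d ⟨hd, h⟩ => ⟨hyperbolic_normalizedDerivative hpos hs.ne' hd h,
      natDegree_normalizedDerivative_le a s m d⟩)
    (natDegree_sect_le _ m) (by rw [coeff_sect, if_pos le_rfl]; positivity) fun k hk => ?_
  simpa only [coeff_normalizedDerivative, coeff_sect, if_pos hk] using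
    tendsto_normalizedCoeff hpos hs hδ k

theorem stmt19_general (a : ℕ → ℝ) (hpos : ∀ j, 0 < a j)
    (nseq : ℕ → ℕ) (hmono : StrictMono nseq)
    (hhyp : ∀ j : ℕ, Hyperbolic (sect a (nseq j)))
    (δ : ℝ)
    (hδ : Tendsto (fun n : ℕ => a n ^ 2 / (a (n - 1) * a (n + 1))) atTop (nhds δ)) :
    ∀ m : ℕ, 1 ≤ m →
      Hyperbolic (∑ j ∈ Finset.range (m + 1),
        Polynomial.C (1 / ((j.factorial : ℝ) * Real.sqrt δ ^ (j ^ 2))) * Polynomial.X ^ j) := by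
  intro m _
  have hδ0 : 0 ≤ δ := ge_of_tendsto' hδ fun n => by
    have := hpos n; have := hpos (n - 1); have := hpos (n + 1); positivity
  obtain rfl | hδpos := hδ0.eq_or_lt
  · -- `√0 ^ j² = 0` for `j ≥ 1` and `1 / 0 = 0`, so the polynomial is the constant `1`.
    intro z hz
    simp [Finset.sum_range_succ'] at hz
  rw [← Real.sq_sqrt hδ0] at hδ
  exact hyperbolic_sect_one_div_factorial_mul_pow_sq hpos (Real.sqrt_pos.2 hδpos) hδ
    (hmono.tendsto_atTop.frequently (.of_forall hhyp)) m

/-- If `f(x) = Σ a_j x^j` is entire with positive coefficients, infinitely many of its sections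
are hyperbolic, and `δ_∞ = lim a_n²/(a_{n-1} a_{n+1})` exists, then for every positive integer
`m` the polynomial `Σ_{j=0}^m x^j/(j! (√δ_∞)^{j²})` is hyperbolic. -/
theorem stmt19 (a : ℕ → ℝ) (hpos : ∀ j, 0 < a j)
    (hent : ∀ x : ℝ, Summable fun j : ℕ => a j * x ^ j)
    (nseq : ℕ → ℕ) (hmono : StrictMono nseq)
    (hhyp : ∀ j : ℕ, Hyperbolic (sect a (nseq j)))
    (δ : ℝ)
    (hδ : Tendsto (fun n : ℕ => a n ^ 2 / (a (n - 1) * a (n + 1))) atTop (nhds δ)) :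
    ∀ m : ℕ, 1 ≤ m →
      Hyperbolic (∑ j ∈ Finset.range (m + 1),
        Polynomial.C (1 / ((j.factorial : ℝ) * Real.sqrt δ ^ (j ^ 2))) * Polynomial.X ^ j) :=
  stmt19_general a hpos nseq hmono hhyp δ hδ
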